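/- arXiv:quant-ph/0311008 — 2 statements merged into one kernel-verified Lean document; each statement's English description precedes it below -/
import Mathlib

section
/- Fix n ≥ 1 and let c, r₁, r₂ < 2^n with r₁ > c and r₂ > c. If the X-gate lists gatesList(c, r₁) and gatesList(c, r₂) are both nonempty and have equal first elements (i.e., their longest common prefix is nonempty), then r₁ and r₂ have the same parity (r₁ ≡ r₂ mod 2). -/
/-- Gray-code iteration with explicit fuel: starting from `g`, repeatedly flip the lowest
bit position at which the current value differs from `r`, stopping at the first value
equal to `r`. -/
def grayAux (r : ℕ) : ℕ → ℕ → List ℕ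
  | 0, g => [g]
  | fuel + 1, g =>
    if g = r then [g]
    else g :: grayAux r fuel (g ^^^ 2 ^ ((g ^^^ r).factorization 2))

/-- The Gray code sequence between `c` and `r` for `n`-bit states. -/
def graySeq (n c r : ℕ) : List ℕ := grayAux r (n + 1) c

/-- A controlled-NOT gate on `n` qubits: a target bit position together with the control
condition assigning to each non-target bit position in `{0, …, n−1}` the required
control value (`none` at the target position). -/
abbrev Gate (n : ℕ) := ℕ × (Fin n → Option Bool)

/-- The gate `G(x, y)` for states `x, y` differing in exactly one bit position `t`: the
pair of `t` and the function giving the `i`-th bit of `x` at each position `i ≠ t`. -/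
def gate (n x y : ℕ) : Gate n :=
  ((x ^^^ y).log2,
   fun i => if (i : ℕ) = (x ^^^ y).log2 then none else some (x.testBit i))

/-- The X-gate list of the pair `(c, r)`: the gates for all transitions of the Gray code
sequence `graySeq n c r` except the final one. -/
def gatesList (n c r : ℕ) : List (Gate n) :=
  (((graySeq n c r).zip (graySeq n c r).tail).dropLast).map fun p => gate n p.1 p.2

lemma grayAux_head (r fuel g : ℕ) : ∃ l, grayAux r fuel g = g :: l := by
  cases fuel with
  | zero => exact ⟨[], rfl⟩
  | succ k =>
    by_cases h : g = r
    · exact ⟨[], by simp [grayAux, h]⟩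
    · exact ⟨grayAux r k (g ^^^ 2 ^ ((g ^^^ r).factorization 2)), by simp [grayAux, h]⟩

lemma gatesList_head (n c r : ℕ) (hcr : c ≠ r) (hne : gatesList n c r ≠ []) :
    (gatesList n c r).head? = some (gate n c (c ^^^ 2 ^ ((c ^^^ r).factorization 2))) := by
  obtain ⟨L, hL⟩ := grayAux_head r n (c ^^^ 2 ^ ((c ^^^ r).factorization 2))
  have hseq : graySeq n c r = c :: (c ^^^ 2 ^ ((c ^^^ r).factorization 2)) :: L := by
    simp [graySeq, grayAux, hcr, hL]
  unfold gatesList at hne ⊢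
  rw [hseq] at hne ⊢
  cases L with
  | nil => simp at hne
  | cons a L' => simp [gate]

lemma fst_gate (n c r : ℕ) :
    (gate n c (c ^^^ 2 ^ ((c ^^^ r).factorization 2))).1 = (c ^^^ r).factorization 2 := by
  simp [gate, xor_cancel_left, Nat.log2_two_pow]

/-- Lemma 2: within a column `c`, if the X-gate lists of two subcircuits are nonempty
and share their first gate (nonempty longest common prefix), then the two row values
have the same parity. -/
theorem intracolumn_overlap_same_parity (n c r₁ r₂ : ℕ) (hn : 1 ≤ n)
    (hc : c < 2 ^ n) (hr₁ : r₁ < 2 ^ n) (hr₂ : r₂ < 2 ^ n)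
    (h₁ : c < r₁) (h₂ : c < r₂)
    (hne₁ : gatesList n c r₁ ≠ []) (hne₂ : gatesList n c r₂ ≠ [])
    (hhead : (gatesList n c r₁).head? = (gatesList n c r₂).head?) :
    r₁ % 2 = r₂ % 2 := by
  rw [gatesList_head n c r₁ h₁.ne hne₁, gatesList_head n c r₂ h₂.ne hne₂] at hhead
  have ht : (c ^^^ r₁).factorization 2 = (c ^^^ r₂).factorization 2 := by
    have := congrArg (fun o => (Option.map Prod.fst o)) hhead
    simpa [fst_gate] using this
  have hx₁ : c ^^^ r₁ ≠ 0 := by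
    simp [xor_eq_zero_iff]; exact h₁.ne
  have hx₂ : c ^^^ r₂ ≠ 0 := by
    simp [xor_eq_zero_iff]; exact h₂.ne
  have hd : (2 ∣ (c ^^^ r₁)) ↔ (2 ∣ (c ^^^ r₂)) := by
    rw [Nat.Prime.dvd_iff_one_le_factorization Nat.prime_two hx₁,
        Nat.Prime.dvd_iff_one_le_factorization Nat.prime_two hx₂, ht]
  rw [Nat.dvd_iff_mod_eq_zero, Nat.dvd_iff_mod_eq_zero, Nat.xor_mod_two_eq,
      Nat.xor_mod_two_eq] at hd
  omega
end

section
/- Fix n ≥ 2. The number of columns c ∈ {0, 1, …, 2^n − 3} such that the X-gate lists gatesList(c, 2^n − 1) and gatesList(c+1, c+2) are both nonempty and have equal first elements equals 2^(n−1) − 1. (Here gatesList(c, 2^n − 1) corresponds to the last palindromic subcircuit of column c and gatesList(c+1, c+2) to the first palindromic subcircuit of column c+1 in the conventional ordering of two-level decomposition; consequently the conventional circuit with cancellation has exactly 2·(2^(n−1) − 1) fewer gates than without cancellation.) -/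
/- ### Auxiliary lemmas -/

theorem xor_one_of_even (c : ℕ) (h : c % 2 = 0) : c ^^^ 1 = c + 1 := by
  apply Nat.eq_of_testBit_eq
  intro i
  rcases i with _ | i
  · simp [Nat.testBit_zero]
  · rw [Nat.testBit_succ, Nat.testBit_succ, Nat.xor_div_two]
    norm_num
    congr 1
    omega

theorem succ_xor_one_of_even (c : ℕ) (h : c % 2 = 0) : (c + 1) ^^^ 1 = c := by
  rw [← xor_one_of_even c h, Nat.xor_assoc, Nat.xor_self, Nat.xor_zero]

theorem odd_factorization (a : ℕ) (h : a % 2 = 1) : a.factorization 2 = 0 :=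
  Nat.factorization_eq_zero_of_not_dvd (by omega)

theorem grayAux_ne_nil (r fuel g : ℕ) : grayAux r fuel g ≠ [] := by
  cases fuel <;> simp [grayAux] <;> split <;> simp

theorem grayAux_self (r fuel : ℕ) : grayAux r fuel r = [r] := by
  cases fuel <;> simp [grayAux]

/-- For even `c` with `c < 2^n - 2`, the first gate of the last subcircuit of column `c`. -/
theorem head_last (n c : ℕ) (hn : 2 ≤ n) (hc : c % 2 = 0) (hlt : c < 2 ^ n - 2) :
    (gatesList n c (2 ^ n - 1)).head? = some (gate n c (c + 1)) := by
  obtain ⟨m, rfl⟩ : ∃ m, n = m + 2 := ⟨n - 2, by omega⟩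
  set r := 2 ^ (m + 2) - 1 with hr
  have h4 : 4 ≤ 2 ^ (m + 2) := by
    calc (4:ℕ) = 2 ^ 2 := by norm_num
    _ ≤ 2 ^ (m + 2) := Nat.pow_le_pow_right (by norm_num) (by omega)
  have hrodd : r % 2 = 1 := by
    have : 2 ^ (m + 2) % 2 = 0 := by
      have : (2:ℕ) ∣ 2 ^ (m + 2) := dvd_pow_self 2 (by omega)
      omega
    omega
  have hne : c ≠ r := by omega
  have hxodd : (c ^^^ r) % 2 = 1 := by rw [Nat.xor_mod_two_eq]; omega
  have hstep : c ^^^ 2 ^ ((c ^^^ r).factorization 2) = c + 1 := by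
    rw [odd_factorization _ hxodd, pow_zero, xor_one_of_even c hc]
  have hne2 : c + 1 ≠ r := by omega
  have hseq : graySeq (m + 2) c r = c :: (c + 1) :: grayAux r (m + 1) ((c+1) ^^^ 2 ^ (((c+1) ^^^ r).factorization 2)) := by
    rw [graySeq]
    rw [show m + 2 + 1 = (m + 2) + 1 from rfl, grayAux, if_neg hne, hstep,
      grayAux, if_neg hne2]
  rw [gatesList, hseq]
  obtain ⟨x, t, hL⟩ : ∃ x t, grayAux r (m + 1) ((c+1) ^^^ 2 ^ (((c+1) ^^^ r).factorization 2)) = x :: t := by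
    rcases h : grayAux r (m + 1) ((c+1) ^^^ 2 ^ (((c+1) ^^^ r).factorization 2)) with _ | ⟨x, t⟩
    · exact absurd h (grayAux_ne_nil _ _ _)
    · exact ⟨x, t, rfl⟩
  rw [hL]
  simp [List.zip]

/-- For even `c`, the first gate of the first subcircuit of column `c + 1`. -/
theorem head_first (n c : ℕ) (hn : 2 ≤ n) (hc : c % 2 = 0) :
    (gatesList n (c + 1) (c + 2)).head? = some (gate n (c + 1) c) := by
  obtain ⟨m, rfl⟩ : ∃ m, n = m + 2 := ⟨n - 2, by omega⟩
  have hne : c + 1 ≠ c + 2 := by omega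
  have hxodd : ((c + 1) ^^^ (c + 2)) % 2 = 1 := by rw [Nat.xor_mod_two_eq]; omega
  have hstep : (c + 1) ^^^ 2 ^ (((c + 1) ^^^ (c + 2)).factorization 2) = c := by
    rw [odd_factorization _ hxodd, pow_zero, succ_xor_one_of_even c hc]
  have hne2 : c ≠ c + 2 := by omega
  have hseq : graySeq (m + 2) (c + 1) (c + 2) = (c + 1) :: c :: grayAux (c + 2) (m + 1) (c ^^^ 2 ^ ((c ^^^ (c + 2)).factorization 2)) := by
    rw [graySeq]
    rw [show m + 2 + 1 = (m + 2) + 1 from rfl, grayAux, if_neg hne, hstep,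
      grayAux, if_neg hne2]
  rw [gatesList, hseq]
  obtain ⟨x, t, hL⟩ : ∃ x t, grayAux (c + 2) (m + 1) (c ^^^ 2 ^ ((c ^^^ (c + 2)).factorization 2)) = x :: t := by
    rcases h : grayAux (c + 2) (m + 1) (c ^^^ 2 ^ ((c ^^^ (c + 2)).factorization 2)) with _ | ⟨x, t⟩
    · exact absurd h (grayAux_ne_nil _ _ _)
    · exact ⟨x, t, rfl⟩
  rw [hL]
  simp [List.zip]

/-- For odd `c`, the first subcircuit of column `c + 1` is trivial. -/
theorem first_nil (n c : ℕ) (hc : c % 2 = 1) :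
    gatesList n (c + 1) (c + 2) = [] := by
  have hne : c + 1 ≠ c + 2 := by omega
  have h1 : (c + 1) ^^^ (c + 2) = 1 := by
    have := xor_one_of_even (c + 1) (by omega)
    have h2 : (c + 1) ^^^ ((c + 1) ^^^ 1) = 1 := by
      rw [← Nat.xor_assoc, Nat.xor_self, Nat.zero_xor]
    rwa [this] at h2
  have hstep : (c + 1) ^^^ 2 ^ (((c + 1) ^^^ (c + 2)).factorization 2) = c + 2 := by
    rw [h1, Nat.factorization_one, Finsupp.coe_zero, Pi.zero_apply, pow_zero,
      xor_one_of_even (c + 1) (by omega)]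
  have hseq : graySeq n (c + 1) (c + 2) = [c + 1, c + 2] := by
    rw [graySeq, grayAux, if_neg hne, hstep, grayAux_self]
  rw [gatesList, hseq]
  simp

/-- The shared first gate is the same gate. -/
theorem gate_eq (n c : ℕ) (hc : c % 2 = 0) : gate n c (c + 1) = gate n (c + 1) c := by
  have h1 : c ^^^ (c + 1) = 1 := by
    have := xor_one_of_even c hc
    have h2 : c ^^^ (c ^^^ 1) = 1 := by rw [← Nat.xor_assoc, Nat.xor_self, Nat.zero_xor]
    rwa [this] at h2
  have h1' : (c + 1) ^^^ c = 1 := by rw [Nat.xor_comm]; exact h1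
  have hlog : Nat.log2 1 = 0 := by simp [Nat.log2]; rfl
  unfold gate
  rw [h1, h1', hlog]
  refine Prod.ext rfl ?_
  funext i
  by_cases hi : (i : ℕ) = 0
  · simp [hi]
  · simp only [hi, if_false]
    obtain ⟨j, hj⟩ : ∃ j, (i : ℕ) = j + 1 := ⟨(i : ℕ) - 1, by omega⟩
    rw [hj, Nat.testBit_succ, Nat.testBit_succ]
    congr 2
    omega

theorem count_even (N : ℕ) :
    ((Finset.range N).filter (fun c => c % 2 = 0)).card = (N + 1) / 2 := by
  induction N with
  | zero => simp
  | succ N ih =>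
    rw [Finset.range_add_one, Finset.filter_insert]
    split <;> rename_i h <;> simp [ih] <;> omega

/-- In the conventional ordering, the number of columns `c ∈ {0, …, 2^n − 3}` for which
the last subcircuit of column `c` (pair `(c, 2^n − 1)`) and the first subcircuit of
column `c + 1` (pair `(c + 1, c + 2)`) have nonempty X-gate lists sharing their first
gate is exactly `2^(n−1) − 1`. -/
theorem intercolumn_cancellation_count (n : ℕ) (hn : 2 ≤ n) :
    ((Finset.range (2 ^ n - 2)).filter (fun c =>
        gatesList n c (2 ^ n - 1) ≠ [] ∧ gatesList n (c + 1) (c + 2) ≠ [] ∧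
        (gatesList n c (2 ^ n - 1)).head? = (gatesList n (c + 1) (c + 2)).head?)).card
      = 2 ^ (n - 1) - 1 := by
  have hfilter : (Finset.range (2 ^ n - 2)).filter (fun c =>
        gatesList n c (2 ^ n - 1) ≠ [] ∧ gatesList n (c + 1) (c + 2) ≠ [] ∧
        (gatesList n c (2 ^ n - 1)).head? = (gatesList n (c + 1) (c + 2)).head?)
      = (Finset.range (2 ^ n - 2)).filter (fun c => c % 2 = 0) := by
    apply Finset.filter_congr
    intro c hc
    rw [Finset.mem_range] at hc
    constructor
    · rintro ⟨-, h2, -⟩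
      by_contra hodd
      exact h2 (first_nil n c (by omega))
    · intro hceven
      have hA := head_last n c hn hceven hc
      have hB := head_first n c hn hceven
      refine ⟨?_, ?_, ?_⟩
      · intro h; rw [h] at hA; simp at hA
      · intro h; rw [h] at hB; simp at hB
      · rw [hA, hB, gate_eq n c hceven]
  rw [hfilter, count_even]
  have h2n : 2 ^ n = 2 * 2 ^ (n - 1) := by
    rw [← pow_succ']
    congr 1
    omega
  have h4 : 4 ≤ 2 ^ n := by
    calc (4:ℕ) = 2 ^ 2 := by norm_num
    _ ≤ 2 ^ n := Nat.pow_le_pow_right (by norm_num) hn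
  omega
end
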